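/- arXiv:2302.13021 — 3 statements merged into one kernel-verified Lean document; each statement's English description precedes it below -/
import Mathlib

section
/- For every integer m ≥ 3 one has the ratio bounds ω_{m−1}/ω_{m−2} ≥ σ_{m−1} and σ_{m−1} > (((1−α)/(2α))·(m−2)) / ((m−1)/α − α), where in particular ω_{m−2} ≠ 0. -/
/-- The SFTR-1/2 weights `ω_m`. -/
noncomputable def sftrW (α : ℝ) : ℕ → ℝ
  | 0 => (2 * α / (α + 1)) ^ α
  | 1 => -α * (2 * α / (α + 1)) ^ (α + 1)
  | (m + 2) =>
      2 * α / (((m : ℝ) + 2) * (α + 1)) *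
        (((((m : ℝ) + 2) - 1) / α - α) * sftrW α (m + 1) +
          (α - 1) / (2 * α) * (((m : ℝ) + 2) - 2) * sftrW α m)

/-- `σ_m` from the paper. -/
noncomputable def sigmaW (α : ℝ) (m : ℕ) : ℝ :=
  (1 - α) / (2 * α) * ((m : ℝ) - 1) / ((m : ℝ) / α - α) * (2 / (1 + α)) * (1 + 1 / (m : ℝ))

/-!
With `ω_{k+2} = c (A ω_{k+1} + B ω_k)`, `c ≥ 0` and `B ≤ 0`, the one-sided bound
`ω_{k+1} ≤ σ_{k+1} ω_k` between negative weights propagates: it gives `ω_k ≥ ω_{k+1} / σ_{k+1}`,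
hence `ω_{k+2} ≤ c (A + B / σ_{k+1}) ω_{k+1}`, and `σ_{k+2} ≤ c (A + B / σ_{k+1})` is a polynomial
inequality in `k` and `α`. It starts from `ω_2 = (1 - α) ω_1` with `ω_1 < 0`. The strict bound
holds because `σ_m` is the lower bound times `2 / (1 + α)` and `1 + 1 / m`, both larger than `1`.
-/

lemma sftrW_add_two (α : ℝ) (k : ℕ) :
    sftrW α (k + 2) = 2 * α / ((k + 2) * (α + 1)) *
      (((k + 1) / α - α) * sftrW α (k + 1) + (α - 1) / (2 * α) * k * sftrW α k) := by
  rw [sftrW.eq_3]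
  ring

variable {α : ℝ}

lemma sftrW_one_neg (hα0 : 0 < α) : sftrW α 1 < 0 := by
  have : 0 < (2 * α / (α + 1)) ^ (α + 1) := by positivity
  rw [sftrW.eq_2]
  nlinarith

lemma sftrW_two (hα0 : 0 < α) : sftrW α 2 = (1 - α) * sftrW α 1 := by
  rw [sftrW_add_two α 0]
  field_simp
  ring

lemma sigmaW_eq (hα0 : 0 < α) (hα1 : α < 1) {n : ℕ} (hn : 1 ≤ n) :
    sigmaW α n = (1 - α) * (n - 1) * (n + 1) / ((n - α ^ 2) * (1 + α) * n) := by
  have hn : (1 : ℝ) ≤ n := by exact_mod_cast hn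
  have : (n : ℝ) - α ^ 2 ≠ 0 := by nlinarith
  rw [sigmaW, div_sub' hα0.ne']
  field_simp

lemma sigmaW_two_le (hα0 : 0 < α) (hα1 : α < 1) : sigmaW α 2 ≤ 1 - α := by
  rw [sigmaW_eq hα0 hα1 (by norm_num), div_le_iff₀ (by push_cast; nlinarith)]
  push_cast
  nlinarith [mul_pos (mul_pos hα0 hα0) (sub_pos.2 hα1), mul_pos hα0 (sub_pos.2 hα1)]

lemma sigmaW_lowerBound_pos (hα0 : 0 < α) (hα1 : α < 1) {n : ℕ} (hn : 2 ≤ n) :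
    0 < (1 - α) / (2 * α) * ((n : ℝ) - 1) / ((n : ℝ) / α - α) := by
  have hn : (2 : ℝ) ≤ n := by exact_mod_cast hn
  have : 1 < (n : ℝ) / α := (one_lt_div hα0).2 (by linarith)
  have : 0 < 1 - α := by linarith
  apply div_pos _ (by linarith)
  apply mul_pos (by positivity) (by linarith)

lemma lt_sigmaW (hα0 : 0 < α) (hα1 : α < 1) {n : ℕ} (hn : 2 ≤ n) :
    (1 - α) / (2 * α) * ((n : ℝ) - 1) / ((n : ℝ) / α - α) < sigmaW α n := by
  have hn' : (0 : ℝ) < n := by positivity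
  have h2 : 1 < 2 / (1 + α) := (one_lt_div (by linarith)).2 (by linarith)
  have h3 : 1 < 1 + 1 / (n : ℝ) := lt_add_of_pos_right 1 (by positivity)
  rw [sigmaW, mul_assoc]
  exact lt_mul_of_one_lt_right (sigmaW_lowerBound_pos hα0 hα1 hn) (one_lt_mul h2.le h3)

lemma sigmaW_pos (hα0 : 0 < α) (hα1 : α < 1) {n : ℕ} (hn : 2 ≤ n) : 0 < sigmaW α n :=
  (sigmaW_lowerBound_pos hα0 hα1 hn).trans (lt_sigmaW hα0 hα1 hn)

/-- The step inequality `sigmaW_add_two_le` with denominators cleared. The difference of the two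
sides is `α * (2 * P + (n - 1) * Q)` with `P, Q ≥ 0` the two quantities below. -/
lemma sigmaW_step_cleared (hα0 : 0 < α) (hα1 : α < 1) {n : ℝ} (hn : 1 ≤ n) :
    (1 - α) * (n + 1) * (n + 3) * (n + 2) ≤
      (n + 1 - α ^ 2) * ((n + 1) * (1 - α) + 2) * (n + 2 - α ^ 2) := by
  have hP : 0 ≤ (1 - α) * (6 - 4 * α + α ^ 2) + α ^ 3 * (3 - α) := by
    have : 0 ≤ 6 - 4 * α + α ^ 2 := by nlinarith
    have : 0 ≤ 1 - α := by linarith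
    have : 0 ≤ 3 - α := by linarith
    positivity
  have hQ : 0 ≤ 2 * (1 - α + α ^ 2) * (n + 3) + (2 - 5 * α + α ^ 2 + α ^ 3 - α ^ 4) := by
    nlinarith [mul_nonneg (sub_nonneg.2 hn) (by nlinarith : (0 : ℝ) ≤ 1 - α + α ^ 2),
      pow_le_pow_of_le_one hα0.le hα1.le (by norm_num : 3 ≤ 4)]
  linear_combination (exp := 1) α * (2 * hP + mul_nonneg (sub_nonneg.2 hn) hQ)

lemma sigmaW_add_two_le (hα0 : 0 < α) (hα1 : α < 1) {k : ℕ} (hk : 1 ≤ k) :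
    sigmaW α (k + 2) ≤ 2 * α / ((k + 2) * (α + 1)) *
      ((k + 1) / α - α + (α - 1) / (2 * α) * k / sigmaW α (k + 1)) := by
  have hk' : (1 : ℝ) ≤ k := by exact_mod_cast hk
  have : (0 : ℝ) < k + 2 - α ^ 2 := by nlinarith
  have hrhs : 2 * α / ((k + 2) * (α + 1)) *
      ((k + 1) / α - α + (α - 1) / (2 * α) * k / sigmaW α (k + 1)) =
      (k + 1 - α ^ 2) * ((k + 1) * (1 - α) + 2) / ((k + 2) ^ 2 * (α + 1)) := by
    have : (1 : ℝ) - α ≠ 0 := by linarith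
    rw [sigmaW_eq hα0 hα1 (by omega)]
    push_cast [add_sub_cancel_right]
    field_simp
    ring
  rw [hrhs, sigmaW_eq hα0 hα1 (by omega), div_le_div_iff₀ (by push_cast; positivity) (by positivity)]
  push_cast
  linear_combination (exp := 1) ((k + 2) * (1 + α)) * sigmaW_step_cleared hα0 hα1 hk'

lemma le_mul_of_threeTerm_recurrence {c a b s t x y z : ℝ} (hz : z = c * (a * y + b * x))
    (hc : 0 ≤ c) (hb : b ≤ 0) (hs : 0 < s) (hy : y < 0) (hyx : y ≤ s * x) (ht : t ≤ c * (a + b / s)) :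
    z ≤ t * y := by
  have hx : y / s ≤ x := (div_le_iff₀' hs).2 hyx
  calc z ≤ c * (a * y + b * (y / s)) := by
        rw [hz]; gcongr ?_ * (_ + ?_); exact mul_le_mul_of_nonpos_left hx hb
    _ = c * (a + b / s) * y := by ring
    _ ≤ t * y := mul_le_mul_of_nonpos_right ht hy.le

lemma sftrW_neg_and_le (hα0 : 0 < α) (hα1 : α < 1) {k : ℕ} (hk : 1 ≤ k) :
    sftrW α k < 0 ∧ sftrW α (k + 1) ≤ sigmaW α (k + 1) * sftrW α k := by
  induction k, hk using Nat.le_induction with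
  | base =>
    refine ⟨sftrW_one_neg hα0, ?_⟩
    rw [sftrW_two hα0]
    exact mul_le_mul_of_nonpos_right (sigmaW_two_le hα0 hα1) (sftrW_one_neg hα0).le
  | succ k hk ih =>
    obtain ⟨hneg, hle⟩ := ih
    have hσ := sigmaW_pos hα0 hα1 (by omega : 2 ≤ k + 1)
    have hneg' : sftrW α (k + 1) < 0 := hle.trans_lt (mul_neg_of_pos_of_neg hσ hneg)
    have hB : (α - 1) / (2 * α) * k ≤ 0 :=
      mul_nonpos_of_nonpos_of_nonneg (div_nonpos_of_nonpos_of_nonneg (by linarith) (by positivity))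
        k.cast_nonneg
    exact ⟨hneg', le_mul_of_threeTerm_recurrence (sftrW_add_two α k) (by positivity) hB hσ hneg'
      hle (sigmaW_add_two_le hα0 hα1 hk)⟩

theorem sftrW_ratio_bounds (α : ℝ) (hα : α ∈ Set.Ioo (0 : ℝ) 1) :
    ∀ m : ℕ, 3 ≤ m →
      sftrW α (m - 2) ≠ 0 ∧
      sigmaW α (m - 1) ≤ sftrW α (m - 1) / sftrW α (m - 2) ∧
      (1 - α) / (2 * α) * ((m : ℝ) - 2) / (((m : ℝ) - 1) / α - α) < sigmaW α (m - 1) := by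
  obtain ⟨hα0, hα1⟩ := hα
  intro m hm
  obtain ⟨k, rfl⟩ : ∃ k, m = k + 3 := ⟨m - 3, by omega⟩
  obtain ⟨hneg, hle⟩ := sftrW_neg_and_le hα0 hα1 (by omega : 1 ≤ k + 1)
  have hlt := lt_sigmaW hα0 hα1 (by omega : 2 ≤ k + 2)
  simp only [show k + 3 - 2 = k + 1 by omega, show k + 3 - 1 = k + 2 by omega]
  refine ⟨hneg.ne, (le_div_iff_of_neg hneg).2 hle, ?_⟩
  push_cast at hlt ⊢
  convert hlt using 3 <;> ring
end

section
/- The series of SFTR-1/2 weights converges and its sum is zero: Σ_{m=0}^{∞} ω_m = 0. -/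
open Finset

lemma nonpos_of_summable_of_div_nat_add_two_le {g : ℕ → ℝ} {c : ℝ} (hg : Summable g)
    (h : ∀ k : ℕ, c / ((k : ℝ) + 2) ≤ g k) : c ≤ 0 := by
  by_contra! hc
  have hharm : Summable fun k : ℕ => c / ((k : ℝ) + 2) :=
    hg.of_nonneg_of_le (fun k => by positivity) h
  apply Real.not_summable_one_div_natCast
  rw [← summable_nat_add_iff 2]
  refine (hharm.div_const c).congr fun k => ?_
  push_cast
  field_simp

section Weights

variable {α : ℝ}

lemma sftrW_recurrence (hα : α ≠ 0) (hα' : α + 1 ≠ 0) (n : ℕ) :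
    (α + 1) * ((n : ℝ) + 2) * sftrW α (n + 2)
      = (2 * (n : ℝ) + 2 - 2 * α ^ 2) * sftrW α (n + 1) + (α - 1) * n * sftrW α n := by
  have hn : (n : ℝ) + 2 ≠ 0 := by positivity
  rw [sftrW]
  field_simp
  ring

lemma one_add_mul_sftrW_one (hα : α ≠ 0) (hα' : α + 1 ≠ 0) :
    (1 + α) * sftrW α 1 = -2 * α ^ 2 * sftrW α 0 := by
  have hbase : 2 * α / (α + 1) ≠ 0 := div_ne_zero (mul_ne_zero two_ne_zero hα) hα'
  simp only [sftrW, Real.rpow_add_one hbase]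
  field_simp
  ring

lemma mul_sftrW_add_two_eq_sub_sum (hα : α ≠ 0) (hα' : α + 1 ≠ 0) (n : ℕ) :
    (α + 1) * ((n : ℝ) + 2) * sftrW α (n + 2)
      = (1 - α) * ((n : ℝ) + 1) * sftrW α (n + 1)
        - 2 * α ^ 2 * ∑ m ∈ range (n + 2), sftrW α m := by
  induction n with
  | zero =>
    simp only [sum_range_succ, sum_range_zero]
    linear_combination sftrW_recurrence hα hα' 0 + one_add_mul_sftrW_one hα hα'
  | succ n ih =>
    have hrec := sftrW_recurrence hα hα' (n + 1)
    rw [sum_range_succ]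
    push_cast at hrec ⊢
    linear_combination hrec + ih

lemma sftrW_zero_pos (hα0 : 0 < α) : 0 < sftrW α 0 :=
  Real.rpow_pos_of_pos (by positivity) α

lemma sftrW_succ_nonpos_and_mul_le (hα0 : 0 < α) (hα1 : α ≤ 1) (n : ℕ) :
    sftrW α (n + 1) ≤ 0 ∧ (1 + α) * sftrW α (n + 2) ≤ (1 - α) * sftrW α (n + 1) := by
  have hα : α ≠ 0 := hα0.ne'
  have hα' : α + 1 ≠ 0 := by positivity
  induction n with
  | zero =>
    have hω₁ : sftrW α 1 ≤ 0 := by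
      nlinarith [one_add_mul_sftrW_one hα hα', sftrW_zero_pos hα0]
    refine ⟨hω₁, ?_⟩
    have hrec := sftrW_recurrence hα hα' 0
    push_cast at hrec
    nlinarith [mul_nonpos_of_nonneg_of_nonpos (mul_nonneg hα0.le (sub_nonneg.2 hα1)) hω₁]
  | succ n ih =>
    obtain ⟨hω, hratio⟩ := ih
    have hω' : sftrW α (n + 2) ≤ 0 := by nlinarith
    refine ⟨hω', ?_⟩
    have hrec := sftrW_recurrence hα hα' (n + 1)
    push_cast at hrec
    have hn : (0 : ℝ) < n + 3 := by positivity
    refine le_of_mul_le_mul_left ?_ hn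
    -- Substituting `(1-α) ω_{n+1} ≥ (1+α) ω_{n+2}` into the recurrence leaves
    -- `(n+3)(1+α) ω_{n+3} ≤ ((1-α)(n+3) + 2α(1-α)) ω_{n+2}`.
    nlinarith [mul_le_mul_of_nonneg_left hratio (by positivity : (0 : ℝ) ≤ n + 1),
      mul_nonpos_of_nonneg_of_nonpos (mul_nonneg hα0.le (sub_nonneg.2 hα1)) hω']

lemma sftrW_succ_nonpos (hα0 : 0 < α) (hα1 : α ≤ 1) (n : ℕ) : sftrW α (n + 1) ≤ 0 :=
  (sftrW_succ_nonpos_and_mul_le hα0 hα1 n).1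

lemma antitone_sum_range_succ_sftrW (hα0 : 0 < α) (hα1 : α ≤ 1) :
    Antitone fun n : ℕ => ∑ m ∈ range (n + 1), sftrW α m :=
  antitone_nat_of_succ_le fun n => by
    rw [sum_range_succ _ (n + 1)]
    linarith [sftrW_succ_nonpos hα0 hα1 n]

lemma sum_range_succ_sftrW_nonneg (hα0 : 0 < α) (hα1 : α ≤ 1) (n : ℕ) :
    0 ≤ ∑ m ∈ range (n + 1), sftrW α m := by
  cases n with
  | zero => simpa using (sftrW_zero_pos hα0).le
  | succ n =>
    obtain ⟨hω, hratio⟩ := sftrW_succ_nonpos_and_mul_le hα0 hα1 n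
    have hstar := mul_sftrW_add_two_eq_sub_sum hα0.ne' (by positivity) n
    have hS : 0 ≤ 2 * α ^ 2 * ∑ m ∈ range (n + 2), sftrW α m := by
      nlinarith [mul_le_mul_of_nonneg_left hratio (by positivity : (0 : ℝ) ≤ n + 2)]
    exact nonneg_of_mul_nonneg_right hS (by positivity)

lemma summable_neg_sftrW_add_two (hα0 : 0 < α) (hα1 : α ≤ 1) :
    Summable fun k : ℕ => -sftrW α (k + 2) := by
  refine summable_of_sum_range_le (c := ∑ m ∈ range 2, sftrW α m)
    (fun k => neg_nonneg.2 (sftrW_succ_nonpos hα0 hα1 (k + 1))) fun n => ?_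
  have hsplit := sum_range_add (sftrW α) 2 n
  simp only [add_comm 2] at hsplit
  rw [sum_neg_distrib]
  linarith [sum_range_succ_sftrW_nonneg hα0 hα1 (n + 1)]

lemma div_le_neg_sftrW_add_two (hα0 : 0 < α) (hα1 : α ≤ 1) {L : ℝ}
    (hL : ∀ n : ℕ, L ≤ ∑ m ∈ range (n + 1), sftrW α m) (n : ℕ) :
    2 * α ^ 2 * L / (α + 1) / ((n : ℝ) + 2) ≤ -sftrW α (n + 2) := by
  have hstar := mul_sftrW_add_two_eq_sub_sum hα0.ne' (by positivity) n
  have hω : (1 - α) * ((n : ℝ) + 1) * sftrW α (n + 1) ≤ 0 :=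
    mul_nonpos_of_nonneg_of_nonpos (by nlinarith) (sftrW_succ_nonpos hα0 hα1 n)
  rw [div_div, div_le_iff₀ (by positivity)]
  nlinarith [hL (n + 1)]

end Weights

theorem sftrW_sum_zero (α : ℝ) (hα : α ∈ Set.Ioo (0 : ℝ) 1) :
    Filter.Tendsto (fun n : ℕ => ∑ m ∈ Finset.range (n + 1), sftrW α m)
      Filter.atTop (nhds 0) := by
  obtain ⟨hα0, hα1⟩ := hα
  have hanti := antitone_sum_range_succ_sftrW hα0 hα1.le
  have hnonneg := sum_range_succ_sftrW_nonneg hα0 hα1.le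
  have hlim := tendsto_atTop_ciInf hanti ⟨0, Set.forall_mem_range.2 hnonneg⟩
  set L := ⨅ n : ℕ, ∑ m ∈ range (n + 1), sftrW α m
  have hL0 : 0 ≤ L := le_ciInf hnonneg
  have hc : 2 * α ^ 2 * L / (α + 1) ≤ 0 :=
    nonpos_of_summable_of_div_nat_add_two_le (summable_neg_sftrW_add_two hα0 hα1.le)
      (div_le_neg_sftrW_add_two hα0 hα1.le fun n => hanti.le_of_tendsto hlim n)
  have hL : L = 0 := le_antisymm (nonpos_of_mul_nonpos_right
    (by rwa [mul_div_right_comm] at hc) (by positivity)) hL0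
  rwa [hL] at hlim
end

section
/- For every integer n ≥ 1 and every sequence (a_k)_{k≥0} of real numbers, the discrete convolution identity Σ_{s=1}^{n} θ_{n−s} · Σ_{m=0}^{s} ω_m (a_{s−m} − a_0) = a_n − a_{n−1} holds. -/
/-- The sequence `θ_m`. -/
noncomputable def seqTheta (α : ℝ) : ℕ → ℝ
  | 0 => ((α + 1) / (2 * α)) ^ α
  | 1 => (α - 1) * (2 * α + 1) / (α + 1) * seqTheta α 0
  | (m + 2) =>
      2 * α / (((m : ℝ) + 2) * (1 + α)) *
        (((((m : ℝ) + 2) - 1) / α - (1 - α) / (2 * α) * (2 * α + 1)) * seqTheta α (m + 1) +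
          (1 - α) / (2 * α) * (3 - ((m : ℝ) + 2)) * seqTheta α m)

/-!
Put `W = ∑ ω_m z^m`, `Θ = ∑ θ_m z^m` and `λ = (1 - α) / (1 + α)`. The three-term recurrences are
coefficientwise forms of the first-order equations `(1 - z)(1 - λz) W' = κ W` and
`(1 - z)(1 - λz) Θ' = (ν + λz) Θ` with `κ + ν = -1` (in closed form `W = ω_0 ((1 - z)/(1 - λz))^α`
and `Θ = θ_0 (1 - z)^(1-α) (1 - λz)^α`). Hence `P = Θ W` satisfies `(1 - z) P' = -P`, and
`P(0) = θ_0 ω_0 = 1` forces `P = 1 - z`. The left-hand side of the identity is the `n`-th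
coefficient of `Θ W B` with `B = ∑ (a_j - a_0) z^j`, that is of `(1 - z) B`.
-/

namespace PowerSeries

theorem coeff_X_mul_derivative {R : Type*} [CommSemiring R] (f : R⟦X⟧) (k : ℕ) :
    coeff k (X * d⁄dX R f) = k * coeff k f := by
  cases k <;> simp [coeff_derivative, mul_comm]

theorem mul_derivative_mk_eq_of_recurrence {R : Type*} [CommRing R] (f : ℕ → R) (l c d : R)
    (h₀ : f 1 = c * f 0)
    (h : ∀ m : ℕ, (m + 2 : R) * f (m + 2) =
      ((1 + l) * (m + 1) + c) * f (m + 1) - (l * m - d) * f m) :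
    (1 - X) * (1 - C l * X) * d⁄dX R (mk f) = (C c + C d * X) * mk f := by
  have hq : (1 - X) * (1 - C l * X) * d⁄dX R (mk f) =
      d⁄dX R (mk f) - C (1 + l) * (X * d⁄dX R (mk f)) + C l * (X * (X * d⁄dX R (mk f))) := by
    rw [map_add, map_one]; ring
  ext n
  rw [hq]
  cases n with
  | zero =>
    simp only [map_add, map_sub, add_mul, coeff_C_mul, coeff_zero_X_mul, coeff_derivative,
      coeff_mk, mul_assoc, h₀]
    simp
  | succ m =>
    simp only [map_add, map_sub, coeff_C_mul, coeff_succ_X_mul, coeff_X_mul_derivative,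
      coeff_derivative, coeff_mk, add_mul, mul_assoc]
    push_cast
    linear_combination h m

theorem eq_C_mul_one_sub_X_of_one_sub_X_mul_derivative_eq_neg {R : Type*} [CommRing R]
    [IsDomain R] [CharZero R] (P : R⟦X⟧) (h : (1 - X) * d⁄dX R P = -P) :
    P = C (constantCoeff P) * (1 - X) := by
  have hcoeff (n : ℕ) : coeff n ((1 - X) * d⁄dX R P) = coeff n (-P) := by rw [h]
  have h₁ : coeff 1 P = -coeff 0 P := by
    simpa only [sub_mul, one_mul, map_sub, coeff_zero_X_mul, coeff_derivative, map_neg,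
      Nat.cast_zero, zero_add, mul_one, sub_zero] using hcoeff 0
  have hrec (k : ℕ) : (k + 2 : R) * coeff (k + 2) P = k * coeff (k + 1) P := by
    have := hcoeff (k + 1)
    simp only [sub_mul, one_mul, map_sub, coeff_succ_X_mul, coeff_derivative, map_neg] at this
    push_cast at this
    linear_combination this
  have hvanish (k : ℕ) : coeff (k + 2) P = 0 := by
    induction k with
    | zero => simpa using hrec 0
    | succ k ih =>
      have hk : ((k + 3 : ℕ) : R) ≠ 0 := Nat.cast_ne_zero.mpr (by omega)
      have := hrec (k + 1)
      rw [ih, mul_zero] at this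
      push_cast at this hk
      exact (mul_eq_zero.mp (by linear_combination this)).resolve_left hk
  ext n
  rcases n with _ | _ | k
  · simp
  · simp [h₁]
  · simp [hvanish, coeff_X]

theorem coeff_mk_mul_mk_mul_mk_sub {R : Type*} [CommRing R] (θ ω a : ℕ → R) (n : ℕ) :
    coeff n (mk θ * (mk ω * mk fun j => a j - a 0)) =
      ∑ s ∈ Finset.Icc 1 n, θ (n - s) * ∑ m ∈ Finset.range (s + 1), ω m * (a (s - m) - a 0) := by
  rw [mul_comm, coeff_mul, Finset.Nat.sum_antidiagonal_eq_sum_range_succ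
      (fun s k => coeff s (mk ω * mk fun j => a j - a 0) * coeff k (mk θ)),
    Finset.range_eq_Ico, Finset.sum_eq_sum_Ico_succ_bot n.succ_pos, zero_add,
    ← Finset.Ico_add_one_right_eq_Icc]
  simp [coeff_mul, Finset.Nat.sum_antidiagonal_eq_sum_range_succ_mk, mul_comm]

end PowerSeries

open PowerSeries

theorem sftrW_one {α : ℝ} (hα : 0 < α) : sftrW α 1 = -2 * α ^ 2 / (α + 1) * sftrW α 0 := by
  have hb : 0 < 2 * α / (α + 1) := by positivity
  rw [sftrW, sftrW, Real.rpow_add hb, Real.rpow_one]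
  field_simp

theorem sftrW_zero_mul_seqTheta_zero {α : ℝ} (hα : 0 < α) : sftrW α 0 * seqTheta α 0 = 1 := by
  have hb : 0 < 2 * α / (α + 1) := by positivity
  rw [sftrW, seqTheta, ← Real.mul_rpow hb.le (by positivity), div_mul_div_comm, mul_comm (2 * α),
    div_self (by positivity), Real.one_rpow]

theorem mul_derivative_mk_sftrW {α : ℝ} (hα : 0 < α) :
    (1 - X) * (1 - C ((1 - α) / (1 + α)) * X) * d⁄dX ℝ (mk (sftrW α)) =
      C (-2 * α ^ 2 / (α + 1)) * mk (sftrW α) := by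
  simpa using mul_derivative_mk_eq_of_recurrence (sftrW α) ((1 - α) / (1 + α)) _ 0 (sftrW_one hα)
    fun m => by rw [sftrW]; field_simp; ring

theorem mul_derivative_mk_seqTheta {α : ℝ} (hα : 0 < α) :
    (1 - X) * (1 - C ((1 - α) / (1 + α)) * X) * d⁄dX ℝ (mk (seqTheta α)) =
      (C ((α - 1) * (2 * α + 1) / (α + 1)) + C ((1 - α) / (1 + α)) * X) * mk (seqTheta α) :=
  mul_derivative_mk_eq_of_recurrence (seqTheta α) _ _ _ rfl
    fun m => by rw [seqTheta]; field_simp; ring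

theorem mk_seqTheta_mul_mk_sftrW {α : ℝ} (hα : 0 < α) :
    mk (seqTheta α) * mk (sftrW α) = 1 - X := by
  set l := (1 - α) / (1 + α)
  have hκν : C (-2 * α ^ 2 / (α + 1)) + C ((α - 1) * (2 * α + 1) / (α + 1)) = (-1 : ℝ⟦X⟧) := by
    rw [← map_add, ← map_one C, ← map_neg]; congr 1; field_simp; ring
  have hode : (1 - C l * X) * ((1 - X) * d⁄dX ℝ (mk (seqTheta α) * mk (sftrW α))) =
      (1 - C l * X) * -(mk (seqTheta α) * mk (sftrW α)) := by
    rw [Derivation.leibniz, smul_eq_mul, smul_eq_mul]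
    linear_combination mk (seqTheta α) * mul_derivative_mk_sftrW hα
      + mk (sftrW α) * mul_derivative_mk_seqTheta hα + mk (seqTheta α) * mk (sftrW α) * hκν
  have hl : (1 - C l * X : ℝ⟦X⟧) ≠ 0 := fun h => by simpa using congrArg constantCoeff h
  rw [eq_C_mul_one_sub_X_of_one_sub_X_mul_derivative_eq_neg _ (mul_left_cancel₀ hl hode),
    map_mul, constantCoeff_mk, constantCoeff_mk, mul_comm (seqTheta α 0),
    sftrW_zero_mul_seqTheta_zero hα, map_one, one_mul]

theorem discrete_convolution_identity (α : ℝ) (hα : α ∈ Set.Ioo (0 : ℝ) 1) :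
    ∀ n : ℕ, 1 ≤ n → ∀ a : ℕ → ℝ,
      (∑ s ∈ Finset.Icc 1 n, seqTheta α (n - s) *
          ∑ m ∈ Finset.range (s + 1), sftrW α m * (a (s - m) - a 0)) =
        a n - a (n - 1) := by
  intro n hn a
  obtain ⟨n, rfl⟩ := Nat.exists_eq_add_of_le' hn
  rw [← coeff_mk_mul_mk_mul_mk_sub, ← mul_assoc, mk_seqTheta_mul_mk_sftrW hα.1, sub_mul, one_mul,
    map_sub, coeff_succ_X_mul, coeff_mk, coeff_mk, Nat.add_sub_cancel]
  ring
end
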